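/- The set of a ∈ ℂ for which the polynomial g_{3,a}(t,x) is not irreducible in the polynomial ring ℂ[t,x] is finite; in particular, for all but finitely many a ∈ ℂ the conic g_{3,a} = 0 is reduced and irreducible. -/

import Mathlib

open MvPolynomial

/-- The conic `g_{3,a}(t,x) = −a²t² + (17/4)a² + a²x − 3√−1·a·t² + (57/4)√−1·a + (5/4)t²
 − 161/16 + (17/4)x − x²` (`√−1 = i`), as an element of `ℂ[t,x]`; here `t = X 0`, `x = X 1`. -/
noncomputable def g3 (a : ℂ) : MvPolynomial (Fin 2) ℂ :=
  C (-(a ^ 2)) * X 0 ^ 2 + C (17 / 4 * a ^ 2) + C (a ^ 2) * X 1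
    - C (3 * Complex.I * a) * X 0 ^ 2 + C (57 / 4 * Complex.I * a)
    + C (5 / 4) * X 0 ^ 2 - C (161 / 16) + C (17 / 4) * X 1 - X 1 ^ 2

/-!
Viewed as a polynomial in `t` over `ℂ[x]`, `g_{3,a}` has the shape `c(a) t² - q_a(x)` with
`c(a) ∈ ℂ` and `q_a(x) = x² - b(a) x - d(a)`. When `c(a) ≠ 0` this is, up to a unit, a monic
quadratic in `t`, so it is irreducible unless `q_a / c(a)` is a square in `ℂ[x]`; and a
constant multiple of a square has vanishing discriminant `b(a)² + 4 d(a)`. Both `c(a)` and the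
discriminant are nonzero polynomials in `a`, so only finitely many `a` are exceptional.
-/

namespace Polynomial

theorem irreducible_C_mul_X_sq_add_C {R : Type*} [CommRing R] [IsDomain R] {u s : R}
    (hu : IsUnit u) (hs : ∀ r, u * r ^ 2 + s ≠ 0) : Irreducible (C u * X ^ 2 + C s) := by
  obtain ⟨u, rfl⟩ := hu
  have hmonic : (X ^ 2 + C (((u⁻¹ : Rˣ) : R) * s)).Monic := monic_X_pow_add_C _ two_ne_zero
  have hdeg : (X ^ 2 + C (((u⁻¹ : Rˣ) : R) * s)).natDegree = 2 := natDegree_X_pow_add_C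
  have hfactor : C (u : R) * X ^ 2 + C s = C (u : R) * (X ^ 2 + C (((u⁻¹ : Rˣ) : R) * s)) := by
    rw [mul_add, ← C_mul, u.mul_inv_cancel_left]
  rw [hfactor, irreducible_isUnit_mul (isUnit_C.mpr u.isUnit),
    hmonic.irreducible_iff_roots_eq_zero_of_degree_le_three hdeg.ge (by rw [hdeg]; norm_num)]
  refine Multiset.eq_zero_of_forall_notMem fun r hr => hs r ?_
  have hroot := (mem_roots hmonic.ne_zero).mp hr
  simp only [IsRoot, eval_add, eval_pow, eval_X, eval_C] at hroot
  linear_combination (u : R) * hroot - s * u.mul_inv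

theorem X_sq_sub_C_mul_X_sub_C_ne_C_mul_sq {R : Type*} [CommRing R] [IsDomain R] {b d : R}
    (hdisc : b ^ 2 + 4 * d ≠ 0) (k : R) (r : R[X]) : X ^ 2 - C b * X - C d ≠ C k * r ^ 2 := by
  intro h
  have hq : (X ^ 2 - C b * X - C d).natDegree = 2 := by compute_degree!
  have hk : k ≠ 0 := by rintro rfl; simp [h] at hq
  have hr : r.natDegree ≤ 1 := by
    rw [h, natDegree_C_mul hk, natDegree_pow] at hq; omega
  obtain ⟨u, v, rfl⟩ : ∃ u v, r = C u * X + C v := ⟨_, _, eq_X_add_C_of_natDegree_le_one hr⟩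
  have hexpand : C k * (C u * X + C v) ^ 2 =
      C (k * u ^ 2) * X ^ 2 + C (2 * k * u * v) * X + C (k * v ^ 2) := by
    simp only [map_mul, map_pow, map_ofNat]; ring
  rw [hexpand] at h
  have h2 := congrArg (coeff · 2) h
  have h1 := congrArg (coeff · 1) h
  have h0 := congrArg (coeff · 0) h
  simp only [coeff_add, coeff_sub, coeff_C_mul, coeff_X_pow, coeff_X, coeff_C] at h2 h1 h0
  norm_num at h2 h1 h0
  exact hdisc (by linear_combination (2 * k * u * v - b) * h1 - 4 * h0 - 4 * k * v ^ 2 * h2)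

end Polynomial

namespace MvPolynomial

variable (R : Type*) [CommRing R]

noncomputable def bivariateEquiv : MvPolynomial (Fin 2) R ≃ₐ[R] Polynomial (Polynomial R) :=
  (finSuccEquiv R 1).trans (Polynomial.mapAlgEquiv (uniqueAlgEquiv R (Fin 1)))

variable {R}

theorem bivariateEquiv_C (z : R) : bivariateEquiv R (C z) = Polynomial.C (Polynomial.C z) :=
  (bivariateEquiv R).commutes z

theorem bivariateEquiv_X_zero : bivariateEquiv R (X 0) = Polynomial.X := by
  simp [bivariateEquiv, finSuccEquiv_X_zero]

theorem bivariateEquiv_X_one : bivariateEquiv R (X 1) = Polynomial.C Polynomial.X := by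
  have h := finSuccEquiv_X_succ (R := R) (n := 1) (j := 0)
  rw [Fin.succ_zero_eq_one] at h
  simp [bivariateEquiv, h]

end MvPolynomial

open Complex

noncomputable section

def g3TSqCoeff (a : ℂ) : ℂ := -(a ^ 2) - 3 * I * a + 5 / 4

def g3XCoeff (a : ℂ) : ℂ := a ^ 2 + 17 / 4

def g3ConstCoeff (a : ℂ) : ℂ := 17 / 4 * a ^ 2 + 57 / 4 * I * a - 161 / 16

end

theorem bivariateEquiv_g3 (a : ℂ) : bivariateEquiv ℂ (g3 a) =
    Polynomial.C (Polynomial.C (g3TSqCoeff a)) * Polynomial.X ^ 2 +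
      Polynomial.C (Polynomial.C (g3ConstCoeff a) + Polynomial.C (g3XCoeff a) * Polynomial.X
        - Polynomial.X ^ 2) := by
  simp only [g3, g3TSqCoeff, g3XCoeff, g3ConstCoeff, map_add, map_sub, map_mul, map_pow, map_neg,
    bivariateEquiv_C, bivariateEquiv_X_zero, bivariateEquiv_X_one]
  ring

theorem irreducible_g3 {a : ℂ} (hc : g3TSqCoeff a ≠ 0)
    (hdisc : g3XCoeff a ^ 2 + 4 * g3ConstCoeff a ≠ 0) : Irreducible (g3 a) := by
  rw [← MulEquiv.irreducible_iff (bivariateEquiv ℂ), bivariateEquiv_g3]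
  refine Polynomial.irreducible_C_mul_X_sq_add_C (Polynomial.isUnit_C.mpr hc.isUnit) fun r h => ?_
  exact Polynomial.X_sq_sub_C_mul_X_sub_C_ne_C_mul_sq hdisc (g3TSqCoeff a) r
    (by linear_combination -h)

theorem finite_setOf_g3TSqCoeff_eq_zero_or_disc_eq_zero :
    {a : ℂ | g3TSqCoeff a = 0 ∨ g3XCoeff a ^ 2 + 4 * g3ConstCoeff a = 0}.Finite := by
  have hc : (Polynomial.X ^ 2 + Polynomial.C (3 * I) * Polynomial.X - Polynomial.C (5 / 4) :
      Polynomial ℂ) ≠ 0 := by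
    apply Polynomial.Monic.ne_zero; monicity!
  have hdisc : (Polynomial.X ^ 4 + Polynomial.C (51 / 2) * Polynomial.X ^ 2 +
      Polynomial.C (57 * I) * Polynomial.X - Polynomial.C (355 / 16) : Polynomial ℂ) ≠ 0 := by
    apply Polynomial.Monic.ne_zero; monicity!
  refine ((Polynomial.finite_setOfPred_isRoot hc).union
    (Polynomial.finite_setOfPred_isRoot hdisc)).subset ?_
  rintro a (h | h) <;> [left; right] <;>
    simp only [g3TSqCoeff, g3XCoeff, g3ConstCoeff] at h <;>
    simp only [Set.mem_ofPred_eq, Polynomial.IsRoot, Polynomial.eval_add, Polynomial.eval_sub,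
      Polynomial.eval_mul, Polynomial.eval_pow, Polynomial.eval_C, Polynomial.eval_X]
  · linear_combination -h
  · linear_combination h

/-- The set of `a ∈ ℂ` for which `g_{3,a}(t,x)` is not irreducible in `ℂ[t,x]` is finite;
in particular, for all but finitely many `a ∈ ℂ` the conic `g_{3,a} = 0` is reduced and
irreducible. -/
theorem finite_not_irreducible_g3 : {a : ℂ | ¬ Irreducible (g3 a)}.Finite :=
  finite_setOf_g3TSqCoeff_eq_zero_or_disc_eq_zero.subset fun a ha => by
    by_contra h
    obtain ⟨hc, hdisc⟩ := not_or.mp h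
    exact ha (irreducible_g3 hc hdisc)
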